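/- Let X, Y be Hilbert spaces, A₁₁ : X → X* bounded, coercive with constant c > 0, and with operator norm at most c̄. Let A₁₂ : Y → X* be bounded and set A₂₁ := -A₁₂* (restricted appropriately, i.e., ⟨A₁₂ y, x⟩ = -⟨A₂₁ x, y⟩ for all x ∈ X, y ∈ Y). Then the Schur complement W = -A₂₁ A₁₁⁻¹ A₁₂ is accretive: ⟨W y, y⟩ ≥ (c/c̄²)·‖A₁₂ y‖²_{X*} ≥ 0 for all y ∈ Y. -/

import Mathlib

theorem ContinuousLinearMap.div_sq_mul_norm_apply_sq_le_apply_self_of_coercive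
    {X : Type*} [NormedAddCommGroup X] [NormedSpace ℝ X]
    (A : X →L[ℝ] StrongDual ℝ X) {c cbar : ℝ} (hc : 0 ≤ c)
    (hcoer : ∀ v : X, c * ‖v‖ ^ 2 ≤ A v v) (hbound : ‖A‖ ≤ cbar) (v : X) :
    c / cbar ^ 2 * ‖A v‖ ^ 2 ≤ A v v := by
  refine le_trans ?_ (hcoer v)
  rcases eq_or_ne cbar 0 with rfl | hcbar
  · rw [zero_pow two_ne_zero, div_zero, zero_mul]
    positivity
  have hnorm : ‖A v‖ ≤ cbar * ‖v‖ :=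
    (A.le_opNorm v).trans (mul_le_mul_of_nonneg_right hbound (norm_nonneg v))
  calc c / cbar ^ 2 * ‖A v‖ ^ 2 ≤ c / cbar ^ 2 * (cbar * ‖v‖) ^ 2 := by gcongr
    _ = c * ‖v‖ ^ 2 := by field_simp

theorem stmt6_general {X Y : Type*}
    [NormedAddCommGroup X] [InnerProductSpace ℝ X]
    [NormedAddCommGroup Y] [InnerProductSpace ℝ Y]
    (A11 : X →L[ℝ] StrongDual ℝ X) (c cbar : ℝ) (hc : 0 < c)
    (hcoer : ∀ v : X, c * ‖v‖ ^ 2 ≤ A11 v v) (hbound : ‖A11‖ ≤ cbar)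
    (A12 : Y →L[ℝ] StrongDual ℝ X) (A21 : X →L[ℝ] Y)
    (hadj : ∀ (x : X) (y : Y), A12 y x = -(inner ℝ (A21 x) y : ℝ))
    (Ainv : StrongDual ℝ X →L[ℝ] X)
    (hAinv1 : ∀ f, A11 (Ainv f) = f) :
    ∀ y : Y,
      (c / cbar ^ 2) * ‖A12 y‖ ^ 2 ≤ (inner ℝ (-(A21 (Ainv (A12 y)))) y : ℝ) ∧
      0 ≤ (inner ℝ (-(A21 (Ainv (A12 y)))) y : ℝ) := by
  intro y
  set v : X := Ainv (A12 y)
  have hAv : A11 v = A12 y := hAinv1 (A12 y)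
  -- `⟨W y, y⟩` is the energy `⟨A₁₁ v, v⟩` of `v = A₁₁⁻¹ A₁₂ y`.
  have hW : (inner ℝ (-(A21 v)) y : ℝ) = A11 v v := by
    rw [inner_neg_left, ← hadj, hAv]
  rw [hW, ← hAv]
  exact ⟨A11.div_sq_mul_norm_apply_sq_le_apply_self_of_coercive hc.le hcoer hbound v,
    (by positivity : 0 ≤ c * ‖v‖ ^ 2).trans (hcoer v)⟩

/-- If A₁₁ is coercive with constant c and has norm at most c̄, and
A₂₁ = -A₁₂* in the sense that ⟨A₁₂ y, x⟩ = -⟨A₂₁ x, y⟩, then the Schur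
complement W = -A₂₁ A₁₁⁻¹ A₁₂ is accretive:
⟨W y, y⟩ ≥ (c/c̄²)‖A₁₂ y‖² ≥ 0. -/
theorem stmt6 {X Y : Type*}
    [NormedAddCommGroup X] [InnerProductSpace ℝ X] [CompleteSpace X]
    [NormedAddCommGroup Y] [InnerProductSpace ℝ Y] [CompleteSpace Y]
    (A11 : X →L[ℝ] StrongDual ℝ X) (c cbar : ℝ) (hc : 0 < c)
    (hcoer : ∀ v : X, c * ‖v‖ ^ 2 ≤ A11 v v) (hbound : ‖A11‖ ≤ cbar)
    (A12 : Y →L[ℝ] StrongDual ℝ X) (A21 : X →L[ℝ] Y)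
    (hadj : ∀ (x : X) (y : Y), A12 y x = -(inner ℝ (A21 x) y : ℝ))
    (Ainv : StrongDual ℝ X →L[ℝ] X)
    (hAinv1 : ∀ f, A11 (Ainv f) = f) (hAinv2 : ∀ v, Ainv (A11 v) = v) :
    ∀ y : Y,
      (c / cbar ^ 2) * ‖A12 y‖ ^ 2 ≤ (inner ℝ (-(A21 (Ainv (A12 y)))) y : ℝ) ∧
      0 ≤ (inner ℝ (-(A21 (Ainv (A12 y)))) y : ℝ) :=
  stmt6_general A11 c cbar hc hcoer hbound A12 A21 hadj Ainv hAinv1
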